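/- Let D = ⟨R_D, C_D, ≺_D⟩ be a defeasible theory with C_D[p] finite for all p ∈ Lit(D), let E be its defeater- and priority-free form, and let ⟨T_{D,WF}, F_{D,WF}⟩ and ⟨T_{E,WF}, F_{E,WF}⟩ be the well-founded models of D and E (both taken under ADL, or both under NDL). Then for every literal p: if p ∈ T_{D,WF} then p ∈ T_{E,WF}, and if p ∈ F_{D,WF} then p ∈ F_{E,WF}. -/

import Mathlib

/-!
Let `I_E = ⟨T, F⟩` be any fixpoint of `W_E` and `J` its restriction to the literals of `D`;
it suffices to show `W_D(J) ≤ J`, since the well-founded model of `D` is the least fixpoint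
of the monotone operator `W_D` (Knaster–Tarski). A witness of provability of `p` in `D` is
turned into the chain `su(r)`, `fi(r)`, `p` in `E`; for a defeasible `r` the only conflict of
`fi(r)` is `¬fi(r)`, and every rule for `¬fi(r)` contains some `su(s)` with `s` a competitor
that the witness condition blocks, so `su(s)` is false. An unfounded
set `S` of `D` lifts to the unfounded set of `E` made of `S`, the `fi(r)` with head in `S`,
and the `su(r)` whose body meets `F ∪ S`; a defeasible rule escaping through a conflict set
is matched by the rule for `¬fi(r)` built from the overriding competitors.
-/

namespace DLWFS

universe u

/-- Ground literals over a type `A` of atoms: atoms and their classical complements. -/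
inductive Lit (A : Type u) : Type u where
  | pos : A → Lit A
  | neg : A → Lit A

/-- The classical complement `p̄` of a literal `p`. -/
def Lit.compl {A : Type u} : Lit A → Lit A
  | .pos a => .neg a
  | .neg a => .pos a

/-- The three kinds of rules of a defeasible theory. -/
inductive RuleKind : Type where
  | strict
  | defeasible
  | defeater
deriving DecidableEq

/-- A rule of a defeasible theory: a kind, a body (a set of literals) and a head literal. -/
structure DRule (A : Type u) where
  kind : RuleKind
  body : Set (Lit A)
  head : Lit A

/-- A defeasible theory `D = ⟨R, C, ≺⟩`. -/
structure DTheory (A : Type u) where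
  rules : Set (DRule A)
  conflicts : Set (Set (Lit A))
  prec : DRule A → DRule A → Prop

namespace DTheory

variable {A : Type u}

/-- The strict rules `R_s`. -/
def Rs (D : DTheory A) : Set (DRule A) := {r ∈ D.rules | r.kind = RuleKind.strict}

/-- The defeasible rules `R_d`. -/
def Rd (D : DTheory A) : Set (DRule A) := {r ∈ D.rules | r.kind = RuleKind.defeasible}

/-- The defeater rules `R_u`. -/
def Ru (D : DTheory A) : Set (DRule A) := {r ∈ D.rules | r.kind = RuleKind.defeater}

/-- `C[p]`: the conflict sets containing literal `p`. -/
def Cset (D : DTheory A) (p : Lit A) : Set (Set (Lit A)) := {c ∈ D.conflicts | p ∈ c}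

/-- Structural conditions in the definition of a defeasible theory: a countable set of
rules with finite bodies, a countable set of finite conflict sets containing every
minimal conflict set `{p, ¬p}`, and an acyclic priority relation over non-strict rules. -/
def WellFormed (D : DTheory A) : Prop :=
  D.rules.Countable ∧ D.conflicts.Countable ∧
  (∀ r ∈ D.rules, r.body.Finite) ∧
  (∀ c ∈ D.conflicts, c.Finite) ∧
  (∀ p : A, ({Lit.pos p, Lit.neg p} : Set (Lit A)) ∈ D.conflicts) ∧
  (∀ r s, D.prec r s → r.kind ≠ RuleKind.strict ∧ s.kind ≠ RuleKind.strict) ∧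
  (∀ r, ¬ Relation.TransGen D.prec r r)

/-- `C = C_MIN`: the conflict sets are exactly the minimal ones `{p, ¬p}`. -/
def MinimalConflicts (D : DTheory A) : Prop :=
  D.conflicts = {c | ∃ p : A, c = ({Lit.pos p, Lit.neg p} : Set (Lit A))}

end DTheory

/-- A 3-valued interpretation: a pair `⟨T, F⟩` of sets. -/
abbrev Interp (L : Type u) : Type u := Set L × Set L

variable {A : Type u}

/-- `S` is ADL-unfounded with respect to theory `D` and interpretation `I = ⟨T, F⟩`. -/
def ADLUnfounded (D : DTheory A) (I : Interp (Lit A)) (S : Set (Lit A)) : Prop :=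
  ∀ p ∈ S,
    (∀ r ∈ D.Rs, r.head = p → (r.body ∩ (I.2 ∪ S)).Nonempty) ∧
    (∀ r ∈ D.Rd, r.head = p →
      (r.body ∩ (I.2 ∪ S)).Nonempty ∨
      ∃ c ∈ D.conflicts, p ∈ c ∧
        ∀ q ∈ c \ {p}, ∃ s ∈ D.rules, s.head = q ∧ s.body ⊆ I.1 ∧
          (D.prec r s ∨ s.kind = RuleKind.strict))

/-- `S` is NDL-unfounded with respect to theory `D` and interpretation `I = ⟨T, F⟩`. -/
def NDLUnfounded (D : DTheory A) (I : Interp (Lit A)) (S : Set (Lit A)) : Prop :=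
  ∀ p ∈ S,
    (∀ r ∈ D.Rs, r.head = p → (r.body ∩ (I.2 ∪ S)).Nonempty) ∧
    (∀ r ∈ D.Rd, r.head = p →
      (r.body ∩ (I.2 ∪ S)).Nonempty ∨
      ∃ c ∈ D.conflicts, p ∈ c ∧
        ∀ q ∈ c \ {p}, ∃ s ∈ D.rules, s.head = q ∧ s.body ⊆ I.1 ∧
          ¬ D.prec s r)

/-- `U_D(I)` for ADL: the union of all ADL-unfounded sets. -/
def UA (D : DTheory A) (I : Interp (Lit A)) : Set (Lit A) :=
  ⋃₀ {S | ADLUnfounded D I S}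

/-- `U_D(I)` for NDL: the union of all NDL-unfounded sets. -/
def UN (D : DTheory A) (I : Interp (Lit A)) : Set (Lit A) :=
  ⋃₀ {S | NDLUnfounded D I S}

/-- `T_D(I)`: the literals having a witness of provability with respect to `I = ⟨T, F⟩`. -/
def TD (D : DTheory A) (I : Interp (Lit A)) : Set (Lit A) :=
  {p | ∃ r ∈ D.rules, r.head = p ∧ r.body ⊆ I.1 ∧
    (r.kind = RuleKind.strict ∨
      (r.kind = RuleKind.defeasible ∧
        ∀ c ∈ D.conflicts, p ∈ c →
          ∃ q ∈ c \ {p}, ∀ s ∈ D.rules, s.head = q →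
            (D.prec s r ∨ (s.body ∩ I.2).Nonempty)))}

/-- `W_D` for ADL. -/
def WA (D : DTheory A) (I : Interp (Lit A)) : Interp (Lit A) := (TD D I, UA D I)

/-- `W_D` for NDL. -/
def WN (D : DTheory A) (I : Interp (Lit A)) : Interp (Lit A) := (TD D I, UN D I)

/-- `I` is the well-founded model for the operator `W`: the least fixpoint of `W`
(componentwise order). -/
def IsWFModel {L : Type u} (W : Interp L → Interp L) (I : Interp L) : Prop :=
  W I = I ∧ ∀ J, W J = J → I.1 ⊆ J.1 ∧ I.2 ⊆ J.2

/-- A rule of a normal logic program: `head ← pos, ∼neg`. -/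
structure NRule (A : Type u) where
  head : A
  pos : Set A
  neg : Set A

/-- A normal logic program: a set of rules. -/
abbrev NProgram (A : Type u) : Type u := Set (NRule A)

/-- Structural conditions in the definition of a normal logic program: a countable
set of ground rules with finite bodies. -/
def NProgram.WellFormed (P : NProgram A) : Prop :=
  P.Countable ∧ ∀ r ∈ P, r.pos.Finite ∧ r.neg.Finite

/-- The immediate consequence operator `T_Π` on 3-valued interpretations. -/
def TP (P : NProgram A) (I : Interp A) : Set A :=
  {a | ∃ r ∈ P, r.head = a ∧ r.pos ⊆ I.1 ∧ r.neg ⊆ I.2}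

/-- `S` is an unfounded set of program `P` with respect to interpretation `I = ⟨T, F⟩`. -/
def PUnfounded (P : NProgram A) (I : Interp A) (S : Set A) : Prop :=
  ∀ p ∈ S, ∀ r ∈ P, r.head = p →
    (r.pos ∩ (I.2 ∪ S)).Nonempty ∨ (r.neg ∩ I.1).Nonempty

/-- `U_Π(I)`: the greatest unfounded set (union of all unfounded sets). -/
def UP (P : NProgram A) (I : Interp A) : Set A :=
  ⋃₀ {S | PUnfounded P I S}

/-- `W_Π(I) = ⟨T_Π(I), U_Π(I)⟩`. -/
def WP (P : NProgram A) (I : Interp A) : Interp A := (TP P I, UP P I)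

/-- Transfinite iteration of an operator `W` from `⊥`, taking suprema at limit ordinals. -/
noncomputable def iterW {α : Type*} [CompleteLattice α] (W : α → α) : Ordinal.{0} → α :=
  fun o =>
    Ordinal.limitRecOn (motive := fun _ => α) o ⊥ (fun _ ih => W ih)
      (fun o' _ ih => ⨆ x : Set.Iio o', ih x.1 x.2)

/-- One step of the immediate consequence operator for a set of defeasible-theory rules. -/
def TRstep (R : Set (DRule A)) (S : Set (Lit A)) : Set (Lit A) :=
  {p | ∃ r ∈ R, r.head = p ∧ r.body ⊆ S}

/-- The finite iterates `T_R ↑ n`. -/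
def TRiter (R : Set (DRule A)) : ℕ → Set (Lit A)
  | 0 => ∅
  | n + 1 => TRstep R (TRiter R n)

/-- `Cl(R) = T_R ↑ ω`. -/
def ClR (R : Set (DRule A)) : Set (Lit A) := ⋃ n, TRiter R n

/-- The `α`-reduct `D_α^S` of a defeasible theory. -/
def alphaReduct (D : DTheory A) (S : Set (Lit A)) : Set (DRule A) :=
  D.Rs ∪ {r ∈ D.Rd | ∀ c ∈ D.conflicts, r.head ∈ c → ∃ q ∈ c \ {r.head}, q ∉ S}

/-- The ambiguity-propagating operator `α_D(S) = Cl(D_α^S)`. -/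
def alphaOp (D : DTheory A) (S : Set (Lit A)) : Set (Lit A) := ClR (alphaReduct D S)

/-- The `β`-reduct `D_β^S` of a defeasible theory. -/
def betaReduct (D : DTheory A) (S : Set (Lit A)) : Set (DRule A) :=
  D.Rs ∪ {r ∈ D.Rd | ∀ c ∈ D.conflicts, r.head ∈ c →
    ∃ q ∈ c \ {r.head}, ∀ s ∈ D.rules, s.head = q → (¬ s.body ⊆ S ∨ D.prec s r)}

/-- The ambiguity-blocking operator `β_D(S) = Cl(D_β^S)`. -/
def betaOp (D : DTheory A) (S : Set (Lit A)) : Set (Lit A) := ClR (betaReduct D S)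

/-- `S` is an `α`-stable set of `D`. -/
def AlphaStable (D : DTheory A) (S : Set (Lit A)) : Prop := alphaOp D S = S

/-- `S` is a `β`-stable set of `D`. -/
def BetaStable (D : DTheory A) (S : Set (Lit A)) : Prop := betaOp D S = S

/-- The sequence `X_D↑λ`: `X↑0 = ∅`, `X↑(λ+1) = β_D(β_D(X↑λ))`, unions at limits. -/
noncomputable def Xseq (D : DTheory A) : Ordinal.{0} → Set (Lit A) :=
  iterW (fun S => betaOp D (betaOp D S))

/-- The Gelfond–Lifschitz reduct `Π^S`. -/
def glReduct (P : NProgram A) (S : Set A) : NProgram A :=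
  {r' | ∃ r ∈ P, r.neg ∩ S = ∅ ∧ r' = NRule.mk r.head r.pos ∅}

/-- One step of the immediate consequence operator for a NAF-free program. -/
def TPstep (P : NProgram A) (S : Set A) : Set A :=
  {a | ∃ r ∈ P, r.head = a ∧ r.pos ⊆ S}

/-- The finite iterates `T_Π ↑ n` of a NAF-free program. -/
def TPiter (P : NProgram A) : ℕ → Set A
  | 0 => ∅
  | n + 1 => TPstep P (TPiter P n)

/-- `Cl(Π) = T_Π ↑ ω`. -/
def ClP (P : NProgram A) : Set A := ⋃ n, TPiter P n

/-- The Gelfond–Lifschitz operator `γ_Π(S) = Cl(Π^S)`. -/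
def gamma (P : NProgram A) (S : Set A) : Set A := ClP (glReduct P S)

/-- `S` is a stable model of `P`. -/
def StableModel (P : NProgram A) (S : Set A) : Prop := gamma P S = S

/-- `Prod(C[p])`: all sets obtained by choosing one literal other than `p` from each
conflict set containing `p`. -/
def ProdC (D : DTheory A) (p : Lit A) : Set (Set (Lit A)) :=
  {Q | ∃ f : Set (Lit A) → Lit A,
    (∀ c ∈ D.conflicts, p ∈ c → f c ∈ c \ {p}) ∧
    Q = f '' {c ∈ D.conflicts | p ∈ c}}

/-- The logic program translation `Π_D` of a defeasible theory `D` (negative literals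
are treated as fresh atoms, so the atoms of the program are the literals of `D`). -/
def lpTrans (D : DTheory A) : NProgram (Lit A) :=
  {r' | ∃ r ∈ D.Rs, r' = NRule.mk r.head r.body ∅} ∪
  {r' | ∃ r ∈ D.Rd, ∃ Q ∈ ProdC D r.head, r' = NRule.mk r.head r.body Q}

/-- The explicit version `Φ` of a normal program `Π`: atoms of `Φ` are the literals
over the atoms of `Π` (`¬p` being a fresh atom). -/
def explicitVer (P : NProgram A) : NProgram (Lit A) :=
  {r' | ∃ r ∈ P, r' = NRule.mk (Lit.pos r.head) (Lit.pos '' r.pos ∪ Lit.neg '' r.neg) ∅} ∪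
  {r' | ∃ p : A, r' = NRule.mk (Lit.neg p) ∅ {Lit.pos p}}

/-- The minimal conflict sets over atom type `A`. -/
def CMin (A : Type u) : Set (Set (Lit A)) :=
  {c | ∃ p : A, c = ({Lit.pos p, Lit.neg p} : Set (Lit A))}

/-- The defeasible theory translation `D_Π` of a normal program `Π`: each program rule
becomes a strict rule (default literals `∼b` becoming negative literals `¬b`), and each
atom `p` yields a presumption `∅ ⇒ ¬p`; conflict sets are minimal and `≺` is empty. -/
def dtTrans (P : NProgram A) : DTheory A :=
  { rules :=
      {e | ∃ r ∈ P, e = DRule.mk RuleKind.strict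
            (Lit.pos '' r.pos ∪ Lit.neg '' r.neg) (Lit.pos r.head)} ∪
      {e | ∃ p : A, e = DRule.mk RuleKind.defeasible ∅ (Lit.neg p)}
    conflicts := CMin A
    prec := fun _ _ => False }

/-- `M^¬ = M ∪ {¬p : p ∉ M}`, atoms being identified with positive literals. -/
def negCompl (M : Set A) : Set (Lit A) :=
  Lit.pos '' M ∪ Lit.neg '' {p | p ∉ M}

end DLWFS

namespace DLWFS

variable {A : Type u}

/-- The fresh atom `su(r)` of the defeater- and priority-free form, as a literal. -/
def suLit (r : DRule A) : Lit (A ⊕ DRule A × Bool) := Lit.pos (Sum.inr (r, true))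

/-- The fresh atom `fi(r)` of the defeater- and priority-free form, as a literal. -/
def fiLit (r : DRule A) : Lit (A ⊕ DRule A × Bool) := Lit.pos (Sum.inr (r, false))

/-- The literal `¬fi(r)`. -/
def nfiLit (r : DRule A) : Lit (A ⊕ DRule A × Bool) := Lit.neg (Sum.inr (r, false))

/-- Embedding of the literals of `D` into the literals of its defeater- and
priority-free form. -/
def liftLit : Lit A → Lit (A ⊕ DRule A × Bool)
  | .pos a => .pos (Sum.inl a)
  | .neg a => .neg (Sum.inl a)

/-- `RuleKind.strict` if the proposition holds, `RuleKind.defeasible` otherwise. -/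
noncomputable def strictIf (c : Prop) : RuleKind :=
  @ite _ c (Classical.propDecidable c) RuleKind.strict RuleKind.defeasible

/-- The rules of the defeater- and priority-free form `E` of `D`:
(1) for each rule `r : A ⤳ p` of `D`, the strict rule `A → su(r)` and the rule
`{su(r)} → fi(r)` (strict if `r` is strict, defeasible if `r` is defeasible or a
defeater); (2) if `r` is strict or defeasible, the strict rule `{fi(r)} → p`;
(3) for each conflict set `c ∈ C_D[head(r)]` with `r` defeasible and each choice of
rules `s q ∈ R_D[q]` (for `q ∈ c − {head(r)}`) with `¬ (s q ≺_D r)`, the rule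
`{su(s q) : q ∈ c − {head r}} ⟶ ¬fi(r)`, strict if every `s q` is strict or satisfies
`r ≺_D s q`, and defeasible otherwise. -/
noncomputable def EFormRules (D : DTheory A) : Set (DRule (A ⊕ DRule A × Bool)) :=
  {e | ∃ r ∈ D.rules, e = DRule.mk RuleKind.strict (liftLit '' r.body) (suLit r)} ∪
  {e | ∃ r ∈ D.rules,
    e = DRule.mk (strictIf (r.kind = RuleKind.strict)) {suLit r} (fiLit r)} ∪
  {e | ∃ r ∈ D.rules, r.kind ≠ RuleKind.defeater ∧
    e = DRule.mk RuleKind.strict {fiLit r} (liftLit r.head)} ∪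
  {e | ∃ r ∈ D.Rd, ∃ c ∈ D.conflicts, r.head ∈ c ∧
    ∃ s : Lit A → DRule A,
      (∀ q ∈ c \ {r.head}, s q ∈ D.rules ∧ (s q).head = q ∧ ¬ D.prec (s q) r) ∧
      e = DRule.mk
        (strictIf (∀ q ∈ c \ {r.head},
          (s q).kind = RuleKind.strict ∨ D.prec r (s q)))
        ((fun q => suLit (s q)) '' (c \ {r.head})) (nfiLit r)}

/-- The defeater- and priority-free form `E` of a defeasible theory `D`: it uses the
rules above, minimal conflict sets, and the empty priority relation. -/
noncomputable def EForm (D : DTheory A) : DTheory (A ⊕ DRule A × Bool) :=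
  { rules := EFormRules D
    conflicts := CMin (A ⊕ DRule A × Bool)
    prec := fun _ _ => False }

end DLWFS

namespace DLWFS

variable {A : Type u}

abbrev ELit (A : Type u) : Type u := Lit (A ⊕ DRule A × Bool)

abbrev ERule (A : Type u) : Type u := DRule (A ⊕ DRule A × Bool)

lemma strictIf_eq_strict {c : Prop} : strictIf c = RuleKind.strict ↔ c := by
  unfold strictIf; split <;> simp_all

lemma strictIf_eq_defeasible {c : Prop} : strictIf c = RuleKind.defeasible ↔ ¬ c := by
  unfold strictIf; split <;> simp_all

/-- `beats r s` says that the competing rule `s` overrides `r`; ADL and NDL differ only in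
this relation. -/
def UnfoundedAt (D : DTheory A) (beats : DRule A → DRule A → Prop) (I : Interp (Lit A))
    (S : Set (Lit A)) (p : Lit A) : Prop :=
  (∀ r ∈ D.Rs, r.head = p → (r.body ∩ (I.2 ∪ S)).Nonempty) ∧
  (∀ r ∈ D.Rd, r.head = p →
    (r.body ∩ (I.2 ∪ S)).Nonempty ∨
    ∃ c ∈ D.conflicts, p ∈ c ∧
      ∀ q ∈ c \ {p}, ∃ s ∈ D.rules, s.head = q ∧ s.body ⊆ I.1 ∧ beats r s)

def Unfounded (D : DTheory A) (beats : DRule A → DRule A → Prop) (I : Interp (Lit A))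
    (S : Set (Lit A)) : Prop :=
  ∀ p ∈ S, UnfoundedAt D beats I S p

def WU (D : DTheory A) (beats : DRule A → DRule A → Prop) (I : Interp (Lit A)) :
    Interp (Lit A) :=
  (TD D I, ⋃₀ {S | Unfounded D beats I S})

def adlBeats (D : DTheory A) (r s : DRule A) : Prop := D.prec r s ∨ s.kind = RuleKind.strict

def ndlBeats (D : DTheory A) (r s : DRule A) : Prop := ¬ D.prec s r

lemma WA_eq_WU (D : DTheory A) : WA D = WU D (adlBeats D) := rfl

lemma WN_eq_WU (D : DTheory A) : WN D = WU D (ndlBeats D) := rfl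

lemma DTheory.WellFormed.not_prec_of_adlBeats {D : DTheory A} (hwf : D.WellFormed)
    {r s : DRule A} (hrs : adlBeats D r s) : ¬ D.prec s r := by
  obtain ⟨-, -, -, -, -, hnonstrict, hacyclic⟩ := hwf
  intro hsr
  rcases hrs with hrs | hs
  · exact hacyclic r ((Relation.TransGen.single hrs).tail hsr)
  · exact (hnonstrict s r hsr).1 hs

lemma UnfoundedAt.of_blocked {D : DTheory A} {beats : DRule A → DRule A → Prop}
    {I : Interp (Lit A)} {S : Set (Lit A)} {p : Lit A}
    (h : ∀ r ∈ D.rules, r.head = p → (r.body ∩ (I.2 ∪ S)).Nonempty) :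
    UnfoundedAt D beats I S p :=
  ⟨fun r hr => h r hr.1, fun r hr hh => Or.inl (h r hr.1 hh)⟩

lemma TD_mono (D : DTheory A) : Monotone (TD D) := by
  rintro I I' ⟨hT, hF⟩ p ⟨r, hr, rfl, hb, hk⟩
  refine ⟨r, hr, rfl, hb.trans hT, hk.imp_right (And.imp_right fun hwin c hc hpc => ?_)⟩
  obtain ⟨q, hq, hblocked⟩ := hwin c hc hpc
  exact ⟨q, hq, fun s hs hh => (hblocked s hs hh).imp_right fun ⟨l, hl⟩ => ⟨l, hl.1, hF hl.2⟩⟩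

lemma Unfounded.mono {D : DTheory A} {beats : DRule A → DRule A → Prop}
    {I I' : Interp (Lit A)} {S : Set (Lit A)} (hII' : I ≤ I') (hS : Unfounded D beats I S) :
    Unfounded D beats I' S := by
  intro p hp
  obtain ⟨hstrict, hdefeasible⟩ := hS p hp
  have hF : ∀ B : Set (Lit A), B ∩ (I.2 ∪ S) ⊆ B ∩ (I'.2 ∪ S) := fun B =>
    Set.inter_subset_inter_right B (Set.union_subset_union_left S hII'.2)
  refine ⟨fun r hr hh => (hstrict r hr hh).mono (hF _), fun r hr hh => ?_⟩
  refine (hdefeasible r hr hh).imp (·.mono (hF _)) fun ⟨c, hc, hpc, hcomp⟩ => ⟨c, hc, hpc, ?_⟩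
  intro q hq
  obtain ⟨s, hs, hsh, hsb, hbeats⟩ := hcomp q hq
  exact ⟨s, hs, hsh, hsb.trans hII'.1, hbeats⟩

lemma WU_mono (D : DTheory A) (beats : DRule A → DRule A → Prop) : Monotone (WU D beats) := by
  intro I I' hII'
  refine ⟨TD_mono D hII', ?_⟩
  rintro p ⟨S, hS, hp⟩
  exact ⟨S, hS.mono hII', hp⟩

lemma IsWFModel.le_of_map_le {L : Type u} {W : Interp L → Interp L} (hW : Monotone W)
    {I J : Interp L} (hI : IsWFModel W I) (hJ : W J ≤ J) : I ≤ J :=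
  let f : Interp L →o Interp L := ⟨W, hW⟩
  le_trans (show I ≤ f.lfp from hI.2 _ f.map_lfp) (f.lfp_le hJ)

lemma CMin_eq_of_pos_mem {B : Type u} {c : Set (Lit B)} (hc : c ∈ CMin B) {b : B}
    (hb : Lit.pos b ∈ c) : c = {Lit.pos b, Lit.neg b} := by
  obtain ⟨b', rfl⟩ := hc
  obtain rfl : b = b' := by simpa using hb
  rfl

lemma liftLit_injective : Function.Injective (liftLit : Lit A → ELit A) := by
  intro p q h
  cases p <;> cases q <;> simp_all [liftLit]

@[simp] lemma liftLit_ne_pos_inr (p : Lit A) (x : DRule A × Bool) :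
    liftLit p ≠ Lit.pos (Sum.inr x) := by
  cases p <;> simp [liftLit]

@[simp] lemma liftLit_ne_neg_inr (p : Lit A) (x : DRule A × Bool) :
    liftLit p ≠ Lit.neg (Sum.inr x) := by
  cases p <;> simp [liftLit]

def suRule (r : DRule A) : ERule A := ⟨RuleKind.strict, liftLit '' r.body, suLit r⟩

noncomputable def fiRule (r : DRule A) : ERule A :=
  ⟨strictIf (r.kind = RuleKind.strict), {suLit r}, fiLit r⟩

def liftRule (r : DRule A) : ERule A := ⟨RuleKind.strict, {fiLit r}, liftLit r.head⟩

section EFormRules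

variable {D : DTheory A} {r : DRule A} {e : ERule A}

lemma suRule_mem (hr : r ∈ D.rules) : suRule r ∈ (EForm D).rules :=
  Or.inl (Or.inl (Or.inl ⟨r, hr, rfl⟩))

lemma fiRule_mem (hr : r ∈ D.rules) : fiRule r ∈ (EForm D).rules :=
  Or.inl (Or.inl (Or.inr ⟨r, hr, rfl⟩))

lemma liftRule_mem (hr : r ∈ D.rules) (hk : r.kind ≠ RuleKind.defeater) :
    liftRule r ∈ (EForm D).rules :=
  Or.inl (Or.inr ⟨r, hr, hk, rfl⟩)

lemma eq_suRule_of_head_eq (he : e ∈ (EForm D).rules) (hh : e.head = suLit r) :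
    r ∈ D.rules ∧ e = suRule r := by
  rcases he with ((⟨r', hr', rfl⟩ | ⟨r', hr', rfl⟩) | ⟨r', hr', -, rfl⟩) |
    ⟨r', _, _, _, _, _, _, rfl⟩
  · obtain rfl : r' = r := by simpa [suLit] using hh
    exact ⟨hr', rfl⟩
  all_goals simp [suLit, fiLit, nfiLit] at hh

lemma eq_fiRule_of_head_eq (he : e ∈ (EForm D).rules) (hh : e.head = fiLit r) :
    r ∈ D.rules ∧ e = fiRule r := by
  rcases he with ((⟨r', hr', rfl⟩ | ⟨r', hr', rfl⟩) | ⟨r', hr', -, rfl⟩) |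
    ⟨r', _, _, _, _, _, _, rfl⟩
  · simp [suLit, fiLit] at hh
  · obtain rfl : r' = r := by simpa [fiLit] using hh
    exact ⟨hr', rfl⟩
  all_goals simp [fiLit, nfiLit] at hh

lemma exists_eq_liftRule_of_head_eq {p : Lit A} (he : e ∈ (EForm D).rules)
    (hh : e.head = liftLit p) :
    ∃ r ∈ D.rules, r.kind ≠ RuleKind.defeater ∧ r.head = p ∧ e = liftRule r := by
  rcases he with ((⟨r', hr', rfl⟩ | ⟨r', hr', rfl⟩) | ⟨r', hr', hk, rfl⟩) |
    ⟨r', _, _, _, _, _, _, rfl⟩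
  · exact absurd hh.symm (liftLit_ne_pos_inr _ _)
  · exact absurd hh.symm (liftLit_ne_pos_inr _ _)
  · exact ⟨r', hr', hk, liftLit_injective hh, rfl⟩
  · exact absurd hh.symm (liftLit_ne_neg_inr _ _)

lemma exists_body_eq_of_head_eq_nfiLit (he : e ∈ (EForm D).rules) (hh : e.head = nfiLit r) :
    ∃ c ∈ D.conflicts, r.head ∈ c ∧ ∃ sf : Lit A → DRule A,
      (∀ q ∈ c \ {r.head}, sf q ∈ D.rules ∧ (sf q).head = q ∧ ¬ D.prec (sf q) r) ∧
      e.body = (fun q => suLit (sf q)) '' (c \ {r.head}) := by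
  rcases he with ((⟨r', hr', rfl⟩ | ⟨r', hr', rfl⟩) | ⟨r', hr', -, rfl⟩) |
    ⟨r', -, c, hc, hrc, sf, hsf, rfl⟩
  · simp [suLit, nfiLit] at hh
  · simp [fiLit, nfiLit] at hh
  · simp [nfiLit] at hh
  · obtain rfl : r' = r := by simpa [nfiLit] using hh
    exact ⟨c, hc, hrc, sf, hsf, rfl⟩

lemma exists_nfiLit_rule (hr : r ∈ D.Rd) {c : Set (Lit A)} (hc : c ∈ D.conflicts)
    (hrc : r.head ∈ c) {T : Set (Lit A)} {beats : DRule A → Prop}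
    (hbeats : ∀ s, beats s → ¬ D.prec s r)
    (hcomp : ∀ q ∈ c \ {r.head}, ∃ s ∈ D.rules, s.head = q ∧ s.body ⊆ T ∧ beats s) :
    ∃ e ∈ (EForm D).rules, e.head = nfiLit r ∧
      e.body ⊆ suLit '' {s | s ∈ D.rules ∧ s.body ⊆ T} ∧
      ((∀ s, beats s → s.kind = RuleKind.strict ∨ D.prec r s) → e.kind = RuleKind.strict) := by
  have : Nonempty (DRule A) := ⟨r⟩
  choose! sf hsf using hcomp
  refine ⟨_, Or.inr ⟨r, hr, c, hc, hrc, sf, fun q hq => ?_, rfl⟩, rfl, ?_,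
    fun h => strictIf_eq_strict.mpr fun q hq => h _ (hsf q hq).2.2.2⟩
  · obtain ⟨hs, hsh, -, hb⟩ := hsf q hq
    exact ⟨hs, hsh, hbeats _ hb⟩
  · rintro _ ⟨q, hq, rfl⟩
    obtain ⟨hs, -, hsT, -⟩ := hsf q hq
    exact ⟨sf q, ⟨hs, hsT⟩, rfl⟩

end EFormRules

def restrict (I : Interp (ELit A)) : Interp (Lit A) := (liftLit ⁻¹' I.1, liftLit ⁻¹' I.2)

def unfoundedLift (D : DTheory A) (F S : Set (Lit A)) : Set (ELit A) :=
  liftLit '' S ∪ fiLit '' {r | r ∈ D.rules ∧ r.head ∈ S ∧ r.kind ≠ RuleKind.defeater} ∪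
    suLit '' {r | r ∈ D.rules ∧ (r.body ∩ (F ∪ S)).Nonempty}

section Transfer

variable {D : DTheory A} {IE : Interp (ELit A)}

lemma suLit_mem_fst (hT : TD (EForm D) IE ⊆ IE.1) {r : DRule A} (hr : r ∈ D.rules)
    (hb : r.body ⊆ (restrict IE).1) : suLit r ∈ IE.1 :=
  hT ⟨suRule r, suRule_mem hr, rfl, Set.image_subset_iff.mpr hb, Or.inl rfl⟩

lemma fiLit_mem_fst_of_defeasible (hT : TD (EForm D) IE ⊆ IE.1)
    (hsu : ∀ r ∈ D.rules, (r.body ∩ (restrict IE).2).Nonempty → suLit r ∈ IE.2)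
    {r : DRule A} (hr : r ∈ D.rules) (hdef : r.kind = RuleKind.defeasible)
    (hb : r.body ⊆ (restrict IE).1)
    (hwin : ∀ c ∈ D.conflicts, r.head ∈ c → ∃ q ∈ c \ {r.head}, ∀ s ∈ D.rules, s.head = q →
      D.prec s r ∨ (s.body ∩ (restrict IE).2).Nonempty) :
    fiLit r ∈ IE.1 := by
  refine hT ⟨fiRule r, fiRule_mem hr, rfl,
    Set.singleton_subset_iff.mpr (suLit_mem_fst hT hr hb),
    Or.inr ⟨strictIf_eq_defeasible.mpr (by simp [hdef]), fun c hc hfc => ⟨nfiLit r, ?_, ?_⟩⟩⟩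
  · rw [CMin_eq_of_pos_mem hc hfc]
    simp [fiLit, nfiLit]
  · intro e he hh
    obtain ⟨c, hc, hrc, sf, hsf, hbody⟩ := exists_body_eq_of_head_eq_nfiLit he hh
    obtain ⟨q, hq, hqwin⟩ := hwin c hc hrc
    obtain ⟨hs, hsh, hsr⟩ := hsf q hq
    rw [hbody]
    exact Or.inr ⟨suLit (sf q), ⟨q, hq, rfl⟩, hsu _ hs ((hqwin _ hs hsh).resolve_left hsr)⟩

lemma TD_restrict_subset (hT : TD (EForm D) IE ⊆ IE.1)
    (hsu : ∀ r ∈ D.rules, (r.body ∩ (restrict IE).2).Nonempty → suLit r ∈ IE.2) :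
    TD D (restrict IE) ⊆ (restrict IE).1 := by
  rintro _ ⟨r, hr, rfl, hb, hk⟩
  have hfi : fiLit r ∈ IE.1 := by
    rcases hk with hstrict | ⟨hdef, hwin⟩
    · exact hT ⟨fiRule r, fiRule_mem hr, rfl,
        Set.singleton_subset_iff.mpr (suLit_mem_fst hT hr hb),
        Or.inl (strictIf_eq_strict.mpr hstrict)⟩
    · exact fiLit_mem_fst_of_defeasible hT hsu hr hdef hb hwin
  have hk' : r.kind ≠ RuleKind.defeater := by
    rcases hk with h | ⟨h, -⟩ <;> simp [h]
  exact hT ⟨liftRule r, liftRule_mem hr hk', rfl, Set.singleton_subset_iff.mpr hfi, Or.inl rfl⟩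

/- Under ADL the rule for `¬fi(r)` is strict, as the competitors of `r` it is built from are
strict or superior to `r`, and strict rules override in `E`; under NDL every rule overrides. -/
variable {beatsD : DRule A → DRule A → Prop} {beatsE : ERule A → ERule A → Prop}
  (hD : ∀ r s, beatsD r s → ¬ D.prec s r)
  (hE : ∀ r' e, ((∀ r s, beatsD r s → s.kind = RuleKind.strict ∨ D.prec r s) →
    e.kind = RuleKind.strict) → beatsE r' e)
include hD hE

lemma unfoundedAt_fiLit (hT : TD (EForm D) IE ⊆ IE.1) {S : Set (Lit A)}
    (hS : Unfounded D beatsD (restrict IE) S) {r : DRule A} (hr : r ∈ D.rules)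
    (hrS : r.head ∈ S) (hk : r.kind ≠ RuleKind.defeater) :
    UnfoundedAt (EForm D) beatsE IE (unfoundedLift D (restrict IE).2 S) (fiLit r) := by
  have hsu : (r.body ∩ ((restrict IE).2 ∪ S)).Nonempty →
      ((fiRule r).body ∩ (IE.2 ∪ unfoundedLift D (restrict IE).2 S)).Nonempty :=
    fun h => ⟨suLit r, rfl, Or.inr (Or.inr ⟨r, ⟨hr, h⟩, rfl⟩)⟩
  refine ⟨fun e he hh => ?_, fun e he hh => ?_⟩
  · obtain ⟨-, rfl⟩ := eq_fiRule_of_head_eq he.1 hh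
    exact hsu ((hS _ hrS).1 r ⟨hr, strictIf_eq_strict.mp he.2⟩ rfl)
  obtain ⟨-, rfl⟩ := eq_fiRule_of_head_eq he.1 hh
  have hdef : r.kind = RuleKind.defeasible := by
    have := strictIf_eq_defeasible.mp he.2
    cases h : r.kind <;> simp_all
  rcases (hS _ hrS).2 r ⟨hr, hdef⟩ rfl with hb | ⟨c, hc, hrc, hcomp⟩
  · exact Or.inl (hsu hb)
  obtain ⟨e, he, hh, hbody, hstrict⟩ := exists_nfiLit_rule ⟨hr, hdef⟩ hc hrc (hD r) hcomp
  refine Or.inr ⟨{fiLit r, nfiLit r}, ⟨_, rfl⟩, Or.inl rfl, ?_⟩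
  rintro q ⟨rfl | rfl, hq⟩
  · exact absurd rfl hq
  refine ⟨e, he, hh, hbody.trans ?_, hE _ _ fun h => hstrict (h r)⟩
  rintro _ ⟨s, ⟨hs, hsb⟩, rfl⟩
  exact suLit_mem_fst hT hs hsb

theorem Unfounded.lift (hT : TD (EForm D) IE ⊆ IE.1) {S : Set (Lit A)}
    (hS : Unfounded D beatsD (restrict IE) S) :
    Unfounded (EForm D) beatsE IE (unfoundedLift D (restrict IE).2 S) := by
  rintro _ ((⟨p, hp, rfl⟩ | ⟨r, ⟨hr, hrS, hk⟩, rfl⟩) | ⟨r, ⟨hr, hb⟩, rfl⟩)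
  · refine UnfoundedAt.of_blocked fun e he hh => ?_
    obtain ⟨r, hr, hk, rfl, rfl⟩ := exists_eq_liftRule_of_head_eq he hh
    exact ⟨fiLit r, rfl, Or.inr (Or.inl (Or.inr ⟨r, ⟨hr, hp, hk⟩, rfl⟩))⟩
  · exact unfoundedAt_fiLit hD hE hT hS hr hrS hk
  · refine UnfoundedAt.of_blocked fun e he hh => ?_
    obtain ⟨-, rfl⟩ := eq_suRule_of_head_eq he hh
    obtain ⟨l, hl, hlF | hlS⟩ := hb
    · exact ⟨liftLit l, ⟨l, hl, rfl⟩, Or.inl hlF⟩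
    · exact ⟨liftLit l, ⟨l, hl, rfl⟩, Or.inr (Or.inl (Or.inl ⟨l, hlS, rfl⟩))⟩

lemma WU_restrict_le (hIE : WU (EForm D) beatsE IE = IE) :
    WU D beatsD (restrict IE) ≤ restrict IE := by
  have hT : TD (EForm D) IE ⊆ IE.1 := (congrArg Prod.fst hIE).le
  have hlift : ∀ {S}, Unfounded D beatsD (restrict IE) S →
      unfoundedLift D (restrict IE).2 S ⊆ IE.2 := fun hS =>
    (Set.subset_sUnion_of_mem (hS.lift hD hE hT)).trans (congrArg Prod.snd hIE).le
  -- the lift of the empty unfounded set consists of the `su(r)` whose body meets `F`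
  have hsu : ∀ r ∈ D.rules, (r.body ∩ (restrict IE).2).Nonempty → suLit r ∈ IE.2 :=
    fun r hr hb => hlift (S := ∅) (fun _ h => h.elim) (Or.inr ⟨r, ⟨hr, by simpa using hb⟩, rfl⟩)
  refine ⟨TD_restrict_subset hT hsu, ?_⟩
  rintro p ⟨S, hS, hp⟩
  exact hlift hS (Or.inl (Or.inl ⟨p, hp, rfl⟩))

theorem le_restrict_of_isWFModel {ID : Interp (Lit A)} (hID : IsWFModel (WU D beatsD) ID)
    (hIE : WU (EForm D) beatsE IE = IE) : ID ≤ restrict IE :=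
  hID.le_of_map_le (WU_mono D beatsD) (WU_restrict_le hD hE hIE)

end Transfer

theorem eform_sound_general {A : Type*} (D : DTheory A) (hwf : D.WellFormed) :
    (∀ (ID : Interp (Lit A)) (IE : Interp (Lit (A ⊕ DRule A × Bool))),
      IsWFModel (WA D) ID → IsWFModel (WA (EForm D)) IE →
      ∀ p : Lit A, (p ∈ ID.1 → liftLit p ∈ IE.1) ∧ (p ∈ ID.2 → liftLit p ∈ IE.2)) ∧
    (∀ (ID : Interp (Lit A)) (IE : Interp (Lit (A ⊕ DRule A × Bool))),
      IsWFModel (WN D) ID → IsWFModel (WN (EForm D)) IE →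
      ∀ p : Lit A, (p ∈ ID.1 → liftLit p ∈ IE.1) ∧ (p ∈ ID.2 → liftLit p ∈ IE.2)) := by
  refine ⟨fun ID IE hID hIE p => ?_, fun ID IE hID hIE p => ?_⟩
  · rw [WA_eq_WU] at hID hIE
    have h : ID ≤ restrict IE := le_restrict_of_isWFModel (fun _ _ => hwf.not_prec_of_adlBeats)
      (fun _ _ h => Or.inr (h fun _ _ hs => hs.symm)) hID hIE.1
    exact ⟨@h.1 p, @h.2 p⟩
  · rw [WN_eq_WU] at hID hIE
    have h : ID ≤ restrict IE := le_restrict_of_isWFModel (fun _ _ => id) (fun _ _ _ => id)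
      hID hIE.1
    exact ⟨@h.1 p, @h.2 p⟩

/-- Let `D` be a defeasible theory with `C_D[p]` finite for all literals `p`, and `E`
its defeater- and priority-free form. Taking the well-founded models of `D` and `E`
both under ADL, or both under NDL: for every literal `p` of `D`, if `p ∈ T_{D,WF}`
then `p ∈ T_{E,WF}`, and if `p ∈ F_{D,WF}` then `p ∈ F_{E,WF}`. -/
theorem eform_sound {A : Type*} (D : DTheory A) (hwf : D.WellFormed)
    (hfin : ∀ p : Lit A, (D.Cset p).Finite) :
    (∀ (ID : Interp (Lit A)) (IE : Interp (Lit (A ⊕ DRule A × Bool))),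
      IsWFModel (WA D) ID → IsWFModel (WA (EForm D)) IE →
      ∀ p : Lit A, (p ∈ ID.1 → liftLit p ∈ IE.1) ∧ (p ∈ ID.2 → liftLit p ∈ IE.2)) ∧
    (∀ (ID : Interp (Lit A)) (IE : Interp (Lit (A ⊕ DRule A × Bool))),
      IsWFModel (WN D) ID → IsWFModel (WN (EForm D)) IE →
      ∀ p : Lit A, (p ∈ ID.1 → liftLit p ∈ IE.1) ∧ (p ∈ ID.2 → liftLit p ∈ IE.2)) :=
  eform_sound_general D hwf

end DLWFS
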